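/- arXiv:2304.14528 — 3 statements merged into one kernel-verified Lean document; each statement's English description precedes it below -/
import Mathlib

section
/- The graph G(m,n) is well-covered: every maximal independent set of G(m,n) has exactly m+n-1 vertices. -/
/-!
The independent sets of `G(m,n)` meet each antidiagonal `i + j = s` in at most one vertex, since
two distinct vertices of an antidiagonal are adjacent. Conversely a maximal independent set meets
every antidiagonal: if it missed the antidiagonal `s`, each of its vertices `(i, s - i)` would
have a neighbour in the set lying either strictly below-left or strictly above-right of it (rows
counted downwards). At the top end of the antidiagonal only below-left is possible, at the bottom
end only above-right, and a switch between consecutive vertices `(i, s - i)`, `(i + 1, s - i - 1)`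
would produce two adjacent vertices of the set. So `(i, j) ↦ i + j` is a bijection from the set
onto `{0, …, m + n - 2}`.
-/

/-- The graph `G(m,n)`: vertices are pairs `(i,j)` (0-indexed, corresponding to
`x_{i+1,j+1}`), and `x_{i,j} ~ x_{k,l}` iff (`i < k` and `j > l`) or (`i > k` and `j < l`). -/
def gridGraph (m n : ℕ) : SimpleGraph (Fin m × Fin n) where
  Adj u v := (u.1 < v.1 ∧ v.2 < u.2) ∨ (v.1 < u.1 ∧ u.2 < v.2)
  symm := ⟨fun u v h => Or.symm h⟩
  loopless := ⟨fun u h => by rcases h with ⟨h, -⟩ | ⟨h, -⟩ <;> exact absurd h (lt_irrefl _)⟩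

/-- `W` is an independent set of the induced subgraph of `G` on `A`. -/
def IndepOn {V : Type*} (G : SimpleGraph V) (A W : Set V) : Prop :=
  W ⊆ A ∧ ∀ u ∈ W, ∀ v ∈ W, ¬ G.Adj u v

/-- `W` is a maximal independent set of the induced subgraph of `G` on `A`. -/
def MaxIndepOn {V : Type*} (G : SimpleGraph V) (A W : Set V) : Prop :=
  IndepOn G A W ∧ ∀ W', IndepOn G A W' → W ⊆ W' → W' = W

theorem MaxIndepOn.exists_adj {V : Type*} {G : SimpleGraph V} {A W : Set V}
    (hW : MaxIndepOn G A W) {v : V} (hvA : v ∈ A) (hvW : v ∉ W) : ∃ w ∈ W, G.Adj v w := by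
  by_contra! h
  have hindep : IndepOn G A (insert v W) := by
    refine ⟨Set.insert_subset hvA hW.1.1, ?_⟩
    rintro a (rfl | ha) b (rfl | hb)
    · exact G.loopless.irrefl _
    · exact h b hb
    · exact fun hab => h a ha hab.symm
    · exact hW.1.2 a ha b hb
  exact hvW (hW.2 _ hindep (Set.subset_insert v W) ▸ Set.mem_insert v W)

namespace gridGraph

variable {m n : ℕ}

def coordSum (p : Fin m × Fin n) : ℕ := p.1 + p.2

theorem coordSum_lt (p : Fin m × Fin n) : coordSum p < m + n - 1 := by
  have := p.1.isLt
  have := p.2.isLt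
  unfold coordSum
  omega

theorem adj_of_coordSum_eq {u v : Fin m × Fin n} (hne : u ≠ v) (h : coordSum u = coordSum v) :
    (gridGraph m n).Adj u v := by
  unfold coordSum at h
  have h1 : (u.1 : ℕ) ≠ v.1 := fun h1 => hne (Prod.ext (Fin.ext h1) (Fin.ext (by omega)))
  rcases Nat.lt_or_gt_of_ne h1 with h1 | h1
  · exact Or.inl ⟨h1, by simp only [Fin.lt_def]; omega⟩
  · exact Or.inr ⟨h1, by simp only [Fin.lt_def]; omega⟩

theorem injOn_coordSum {A W : Set (Fin m × Fin n)} (hW : IndepOn (gridGraph m n) A W) :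
    Set.InjOn coordSum W := by
  intro u hu v hv h
  by_contra hne
  exact hW.2 u hu v hv (adj_of_coordSum_eq hne h)

theorem exists_coordSum_eq {W : Set (Fin m × Fin n)}
    (hW : MaxIndepOn (gridGraph m n) Set.univ W) (hm : 1 ≤ m) (hn : 1 ≤ n) {s : ℕ}
    (hs : s < m + n - 1) : ∃ p ∈ W, coordSum p = s := by
  by_contra! hno
  have hdom : ∀ i (hi : i < m) (hsi : s - i < n), i ≤ s →
      ∃ w ∈ W, (gridGraph m n).Adj (⟨i, hi⟩, ⟨s - i, hsi⟩) w := fun i hi hsi his =>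
    hW.exists_adj (Set.mem_univ _) fun h => hno _ h (by simp only [coordSum]; omega)
  have hbelowLeft : ∀ i, s - (n - 1) ≤ i → i ≤ min s (m - 1) →
      ∃ w ∈ W, i < (w.1 : ℕ) ∧ (w.2 : ℕ) < s - i := by
    intro i hi
    induction i, hi using Nat.le_induction with
    | base =>
      intro _
      obtain ⟨w, hw, ⟨h1, h2⟩ | ⟨h1, h2⟩⟩ := hdom (s - (n - 1)) (by omega) (by omega) (by omega)
      · exact ⟨w, hw, h1, h2⟩
      · have := w.2.isLt
        simp only [Fin.lt_def] at h1 h2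
        omega
    | succ i hi0 ih =>
      intro hi
      obtain ⟨w, hw, hw1, hw2⟩ := ih ((Nat.le_succ i).trans hi)
      clear ih
      obtain ⟨w', hw', ⟨h1, h2⟩ | ⟨h1, h2⟩⟩ :=
        hdom (i + 1) (by omega) (by omega) (hi.trans (min_le_left _ _))
      · exact ⟨w', hw', h1, h2⟩
      · -- `w'` is above-right of `(i + 1, s - i - 1)` and `w` below-left of `(i, s - i)`
        simp only [Fin.lt_def] at h1 h2
        have hrow : w'.1 < w.1 := by rw [Fin.lt_def]; omega
        have hcol : w.2 < w'.2 := by rw [Fin.lt_def]; omega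
        have hadj : (gridGraph m n).Adj w' w := Or.inl ⟨hrow, hcol⟩
        exact (hW.1.2 w' hw' w hw hadj).elim
  obtain ⟨w, -, h1, h2⟩ := hbelowLeft (min s (m - 1)) (by omega) le_rfl
  have := w.1.isLt
  omega

end gridGraph

/-- `G(m,n)` is well-covered: every maximal independent set has exactly
`m + n - 1` vertices. -/
theorem stmt1 (m n : ℕ) (hm : 1 ≤ m) (hn : 1 ≤ n)
    (W : Set (Fin m × Fin n))
    (hW : MaxIndepOn (gridGraph m n) Set.univ W) :
    W.ncard = m + n - 1 := by
  have himage : gridGraph.coordSum '' W = Set.Iio (m + n - 1) := by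
    refine Set.Subset.antisymm ?_ fun s hs => gridGraph.exists_coordSum_eq hW hm hn hs
    rintro _ ⟨p, -, rfl⟩
    exact gridGraph.coordSum_lt p
  rw [← (gridGraph.injOn_coordSum hW.1).ncard_image, himage, Set.ncard_Iio_nat]
end

section
/- Every induced matching of G(m,n) has at most m-1 edges (assuming m ≤ n). -/
/-- `M` is an induced matching of the induced subgraph of `G` on `A`:
a set of pairwise disjoint edges of `G` with all endpoints in `A`, such that the only
adjacencies among the endpoints are the edges of `M` themselves. -/
def IsInducedMatchingOn {V : Type*} (G : SimpleGraph V) (A : Set V) (M : Set (Sym2 V)) :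
    Prop :=
  (∀ e ∈ M, ∀ v ∈ e, v ∈ A) ∧
  (∀ e ∈ M, ∃ u v, G.Adj u v ∧ e = s(u, v)) ∧
  (∀ e ∈ M, ∀ f ∈ M, e ≠ f → ∀ v ∈ e, v ∉ f) ∧
  (∀ u v : V, (∃ e ∈ M, u ∈ e) → (∃ e ∈ M, v ∈ e) → G.Adj u v → s(u, v) ∈ M)

theorem IsInducedMatchingOn.not_adj {V : Type*} {G : SimpleGraph V} {A : Set V}
    {M : Set (Sym2 V)} (hM : IsInducedMatchingOn G A M) {e f : Sym2 V} (he : e ∈ M)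
    (hf : f ∈ M) (hef : e ≠ f) {u v : V} (hu : u ∈ e) (hv : v ∈ f) : ¬ G.Adj u v := by
  intro huv
  have huvM : s(u, v) ∈ M := hM.2.2.2 u v ⟨e, he, hu⟩ ⟨f, hf, hv⟩ huv
  have he_eq : e = s(u, v) := by
    by_contra hne
    exact hM.2.2.1 e he _ huvM hne u hu (Sym2.mem_mk_left u v)
  have hf_eq : f = s(u, v) := by
    by_contra hne
    exact hM.2.2.1 f hf _ huvM hne v hv (Sym2.mem_mk_right u v)
  exact hef (he_eq.trans hf_eq.symm)

namespace gridGraph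

variable {m n : ℕ}

theorem exists_eq_mk_of_adj {u v : Fin m × Fin n} (h : (gridGraph m n).Adj u v) :
    ∃ a b : Fin m × Fin n, a.1 < b.1 ∧ b.2 < a.2 ∧ s(u, v) = s(a, b) := by
  rcases h with ⟨h₁, h₂⟩ | ⟨h₁, h₂⟩
  · exact ⟨u, v, h₁, h₂, rfl⟩
  · exact ⟨v, u, h₁, h₂, Sym2.eq_swap⟩

theorem adj_or_adj_of_fst_eq {a b a' b' : Fin m × Fin n} (h₁ : a.1 < b.1) (h₂ : b.2 < a.2)
    (h₁' : a'.1 < b'.1) (h₂' : b'.2 < a'.2) (hb : b.1 = b'.1) :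
    (gridGraph m n).Adj a b' ∨ (gridGraph m n).Adj a' b := by
  rcases le_or_gt b'.2 b.2 with hle | hlt
  · exact Or.inl (Or.inl ⟨hb ▸ h₁, hle.trans_lt h₂⟩)
  · exact Or.inr (Or.inl ⟨hb ▸ h₁', hlt.trans h₂'⟩)

def lowerRow (e : Sym2 (Fin m × Fin n)) : ℕ :=
  (e.map fun v => (v.1 : ℕ)).sup

theorem lowerRow_mk {a b : Fin m × Fin n} (h : a.1 < b.1) : lowerRow s(a, b) = b.1 := by
  simpa [lowerRow] using h.le

variable {A : Set (Fin m × Fin n)} {M : Set (Sym2 (Fin m × Fin n))}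

theorem exists_eq_mk_of_mem (hM : IsInducedMatchingOn (gridGraph m n) A M)
    {e : Sym2 (Fin m × Fin n)} (he : e ∈ M) :
    ∃ a b : Fin m × Fin n, a.1 < b.1 ∧ b.2 < a.2 ∧ e = s(a, b) := by
  obtain ⟨u, v, huv, rfl⟩ := hM.2.1 e he
  exact exists_eq_mk_of_adj huv

theorem lowerRow_mem_Ico (hM : IsInducedMatchingOn (gridGraph m n) A M) :
    Set.MapsTo lowerRow M (Set.Ico 1 m) := by
  intro e he
  obtain ⟨a, b, h₁, -, rfl⟩ := exists_eq_mk_of_mem hM he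
  rw [lowerRow_mk h₁]
  exact ⟨(Nat.zero_le _).trans_lt h₁, b.1.isLt⟩

theorem injOn_lowerRow (hM : IsInducedMatchingOn (gridGraph m n) A M) :
    Set.InjOn lowerRow M := by
  intro e he e' he' hrow
  by_contra hne
  obtain ⟨a, b, h₁, h₂, rfl⟩ := exists_eq_mk_of_mem hM he
  obtain ⟨a', b', h₁', h₂', rfl⟩ := exists_eq_mk_of_mem hM he'
  rw [lowerRow_mk h₁, lowerRow_mk h₁'] at hrow
  rcases adj_or_adj_of_fst_eq h₁ h₂ h₁' h₂' (Fin.ext hrow) with hadj | hadj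
  · exact hM.not_adj he he' hne (Sym2.mem_mk_left a b) (Sym2.mem_mk_right a' b') hadj
  · exact hM.not_adj he' he (Ne.symm hne) (Sym2.mem_mk_left a' b') (Sym2.mem_mk_right a b) hadj

end gridGraph

theorem stmt6_general (m n : ℕ)
    (M : Set (Sym2 (Fin m × Fin n)))
    (hM : IsInducedMatchingOn (gridGraph m n) Set.univ M) :
    M.ncard ≤ m - 1 :=
  calc M.ncard ≤ (Set.Ico 1 m).ncard :=
        Set.ncard_le_ncard_of_injOn _ (gridGraph.lowerRow_mem_Ico hM)
          (gridGraph.injOn_lowerRow hM) (Set.finite_Ico 1 m)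
    _ = m - 1 := by simp

/-- for `m ≤ n`, every induced matching of `G(m,n)` has at most `m - 1`
edges. -/
theorem stmt6 (m n : ℕ) (hmn : m ≤ n)
    (M : Set (Sym2 (Fin m × Fin n)))
    (hM : IsInducedMatchingOn (gridGraph m n) Set.univ M) :
    M.ncard ≤ m - 1 :=
  stmt6_general m n M hM
end

section
/- Let G be a down-left graph G(m,n,a,b) with a_i + 1 < b_{i-1} for all i. If W is a maximal independent set of G containing a vertex x_{i,j} with (i,j) ≠ (m,n), then exactly one of x_{i+1,j} or x_{i,j+1} is a vertex of G and lies in W. -/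
theorem MaxIndepOn.exists_adj_of_notMem {V : Type*} {G : SimpleGraph V} {A W : Set V}
    (hW : MaxIndepOn G A W) {x : V} (hxA : x ∈ A) (hxW : x ∉ W) : ∃ w ∈ W, G.Adj x w := by
  by_contra! hx
  have hind : IndepOn G A (insert x W) := by
    refine ⟨Set.insert_subset hxA hW.1.1, ?_⟩
    rintro u (rfl | hu) v (rfl | hv)
    · exact G.loopless.irrefl _
    · exact hx v hv
    · exact fun huv => hx u hu huv.symm
    · exact hW.1.2 u hu v hv
  exact hxW (hW.2 _ hind (Set.subset_insert x W) ▸ Set.mem_insert x W)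

theorem gridGraph_adj_iff {m n : ℕ} {u v : Fin m × Fin n} :
    (gridGraph m n).Adj u v ↔ ¬ u ≤ v ∧ ¬ v ≤ u := by
  simp only [gridGraph, Prod.le_def, Fin.lt_def, Fin.le_def]
  omega

section MaximalIndependent

variable {m n : ℕ} {A W : Set (Fin m × Fin n)}

theorem IndepOn.le_or_le (hW : IndepOn (gridGraph m n) A W) {u v : Fin m × Fin n}
    (hu : u ∈ W) (hv : v ∈ W) : u ≤ v ∨ v ≤ u := by
  by_contra! h
  exact hW.2 u hu v hv (gridGraph_adj_iff.2 h)

theorem MaxIndepOn.exists_below_of_right_notMem (hW : MaxIndepOn (gridGraph m n) A W)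
    {i : Fin m} {j : Fin n} (hx : (i, j) ∈ W) (hjn : j.1 + 1 < n)
    (hrA : (i, ⟨j.1 + 1, hjn⟩) ∈ A) (hrW : (i, ⟨j.1 + 1, hjn⟩) ∉ W) :
    ∃ p, i < p ∧ (p, j) ∈ W := by
  obtain ⟨⟨p, q⟩, hw, hadj⟩ := hW.exists_adj_of_notMem hrA hrW
  have hcomp := hW.1.le_or_le hx hw
  simp only [gridGraph_adj_iff, Prod.le_def, Fin.le_def] at hadj hcomp
  obtain rfl : q = j := Fin.ext (by omega)
  exact ⟨p, Fin.lt_def.2 (by omega), hw⟩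

theorem MaxIndepOn.exists_right_of_below_notMem (hW : MaxIndepOn (gridGraph m n) A W)
    {i : Fin m} {j : Fin n} (hx : (i, j) ∈ W) (him : i.1 + 1 < m)
    (hdA : (⟨i.1 + 1, him⟩, j) ∈ A) (hdW : (⟨i.1 + 1, him⟩, j) ∉ W) :
    ∃ q, j < q ∧ (i, q) ∈ W := by
  obtain ⟨⟨p, q⟩, hw, hadj⟩ := hW.exists_adj_of_notMem hdA hdW
  have hcomp := hW.1.le_or_le hx hw
  simp only [gridGraph_adj_iff, Prod.le_def, Fin.le_def] at hadj hcomp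
  obtain rfl : p = i := Fin.ext (by omega)
  exact ⟨q, Fin.lt_def.2 (by omega), hw⟩

end MaximalIndependent

/-- The vertex set of `G(m,n,a,b)`: `x_{i,j}`, stored as `(i-1, j-1)`, is kept iff
`a_i < j < b_i`. -/
def downLeftVertices (m n : ℕ) (a b : ℕ → ℕ) : Set (Fin m × Fin n) :=
  {p | a (p.1.1 + 1) < p.2.1 + 1 ∧ p.2.1 + 1 < b (p.1.1 + 1)}

theorem monotoneOn_Icc_of_le_succ {α : Type*} [Preorder α] {f : ℕ → α} {k m : ℕ}
    (hf : ∀ i, k ≤ i → i < m → f i ≤ f (i + 1)) : MonotoneOn f (Set.Icc k m) :=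
  monotoneOn_of_le_succ Set.ordConnected_Icc fun i _ hi hi' => by
    rw [Order.succ_eq_add_one, Set.mem_Icc] at *
    exact hf i hi.1 (by omega)

section DownLeft

variable {m n : ℕ} {a b : ℕ → ℕ}

theorem right_mem_downLeftVertices {i : Fin m} {j q : Fin n}
    (hj : (i, j) ∈ downLeftVertices m n a b) (hq : (i, q) ∈ downLeftVertices m n a b)
    (hjq : j < q) : ∃ h : j.1 + 1 < n, (i, ⟨j.1 + 1, h⟩) ∈ downLeftVertices m n a b := by
  simp only [downLeftVertices, Set.mem_ofPred_eq, Fin.lt_def] at hj hq hjq ⊢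
  exact ⟨by omega, by omega⟩

theorem below_mem_downLeftVertices (ha : MonotoneOn a (Set.Icc 1 m))
    (hb : MonotoneOn b (Set.Icc 1 m)) {i p : Fin m} {j : Fin n}
    (hi : (i, j) ∈ downLeftVertices m n a b) (hp : (p, j) ∈ downLeftVertices m n a b)
    (hip : i < p) : ∃ h : i.1 + 1 < m, (⟨i.1 + 1, h⟩, j) ∈ downLeftVertices m n a b := by
  rw [Fin.lt_def] at hip
  have him : i.1 + 1 < m := by omega
  have hap : a (i.1 + 1 + 1) ≤ a (p.1 + 1) :=
    ha ⟨by omega, by omega⟩ ⟨by omega, by omega⟩ (by omega)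
  have hbi : b (i.1 + 1) ≤ b (i.1 + 1 + 1) :=
    hb ⟨by omega, by omega⟩ ⟨by omega, by omega⟩ (by omega)
  simp only [downLeftVertices, Set.mem_ofPred_eq] at hi hp ⊢
  exact ⟨him, by omega, by omega⟩

theorem below_mem_downLeftVertices_of_right_notMem (ha : MonotoneOn a (Set.Icc 1 m))
    (hb : MonotoneOn b (Set.Icc 1 m)) (ham : a m < n) (hbm : b m = n + 1)
    (hab : ∀ i, 2 ≤ i → i ≤ m → a i + 1 < b (i - 1)) {i : Fin m} {j : Fin n}
    (hij : (i, j) ∈ downLeftVertices m n a b) (hne : ¬ (i.1 = m - 1 ∧ j.1 = n - 1))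
    (hr : ¬ ∃ h : j.1 + 1 < n, (i, ⟨j.1 + 1, h⟩) ∈ downLeftVertices m n a b) :
    ∃ h : i.1 + 1 < m, (⟨i.1 + 1, h⟩, j) ∈ downLeftVertices m n a b := by
  simp only [downLeftVertices, Set.mem_ofPred_eq, not_exists, not_and_or] at hij hr ⊢
  have him : i.1 + 1 < m := by
    by_contra! h
    have : b (i.1 + 1) = n + 1 := by rw [show i.1 + 1 = m by omega, hbm]
    have := hr (by omega)
    omega
  have hbi : b (i.1 + 1) ≤ b (i.1 + 1 + 1) :=
    hb ⟨by omega, by omega⟩ ⟨by omega, by omega⟩ (by omega)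
  have hai : a (i.1 + 1 + 1) ≤ a m := ha ⟨by omega, by omega⟩ ⟨by omega, le_rfl⟩ (by omega)
  have hab' : a (i.1 + 1 + 1) + 1 < b (i.1 + 1) := hab (i.1 + 2) (by omega) (by omega)
  refine ⟨him, ?_, by omega⟩
  by_cases hjn : j.1 + 1 < n
  · have := hr hjn
    omega
  · omega

end DownLeft

theorem stmt10_general (m n : ℕ)
    (a b : ℕ → ℕ)
    (hamono : ∀ i, 1 ≤ i → i < m → a i ≤ a (i + 1))
    (ham : a m < n)
    (hbmono : ∀ i, 1 ≤ i → i < m → b i ≤ b (i + 1))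
    (hbm : b m = n + 1)
    (A : Set (Fin m × Fin n))
    (hA : A = {p : Fin m × Fin n |
      a (p.1.1 + 1) < p.2.1 + 1 ∧ p.2.1 + 1 < b (p.1.1 + 1)})
    (hab2 : ∀ i, 2 ≤ i → i ≤ m → a i + 1 < b (i - 1))
    (W : Set (Fin m × Fin n))
    (hW : MaxIndepOn (gridGraph m n) A W)
    (i : Fin m) (j : Fin n) (hmem : (i, j) ∈ W)
    (hne : ¬ (i.1 = m - 1 ∧ j.1 = n - 1)) :
    Xor' (∃ h : i.1 + 1 < m,
            ((⟨i.1 + 1, h⟩ : Fin m), j) ∈ A ∧ ((⟨i.1 + 1, h⟩ : Fin m), j) ∈ W)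
         (∃ h : j.1 + 1 < n,
            (i, (⟨j.1 + 1, h⟩ : Fin n)) ∈ A ∧ (i, (⟨j.1 + 1, h⟩ : Fin n)) ∈ W) := by
  change A = downLeftVertices m n a b at hA
  subst hA
  have ha := monotoneOn_Icc_of_le_succ hamono
  have hb := monotoneOn_Icc_of_le_succ hbmono
  refine (xor_iff_or_and_not_and _ _).2 ⟨?_, fun ⟨⟨_, _, hdW⟩, ⟨_, _, hrW⟩⟩ =>
    hW.1.2 _ hdW _ hrW (Or.inr ⟨Nat.lt_add_one _, Nat.lt_add_one _⟩)⟩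
  by_cases hr : ∃ h : j.1 + 1 < n, (i, ⟨j.1 + 1, h⟩) ∈ downLeftVertices m n a b
  · obtain ⟨hjn, hrA⟩ := hr
    by_cases hrW : (i, ⟨j.1 + 1, hjn⟩) ∈ W
    · exact Or.inr ⟨hjn, hrA, hrW⟩
    obtain ⟨p, hip, hpW⟩ := hW.exists_below_of_right_notMem hmem hjn hrA hrW
    obtain ⟨him, hdA⟩ := below_mem_downLeftVertices ha hb (hW.1.1 hmem) (hW.1.1 hpW) hip
    refine Or.inl ⟨him, hdA, by_contra fun hdW => ?_⟩
    obtain ⟨q, hjq, hqW⟩ := hW.exists_right_of_below_notMem hmem him hdA hdW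
    exact hW.1.2 _ hqW _ hpW (Or.inl ⟨hip, hjq⟩)
  · obtain ⟨him, hdA⟩ :=
      below_mem_downLeftVertices_of_right_notMem ha hb ham hbm hab2 (hW.1.1 hmem) hne hr
    refine Or.inl ⟨him, hdA, by_contra fun hdW => ?_⟩
    obtain ⟨q, hjq, hqW⟩ := hW.exists_right_of_below_notMem hmem him hdA hdW
    exact hr (right_mem_downLeftVertices (hW.1.1 hmem) (hW.1.1 hqW) hjq)

/-- in a down-left graph with `a_i + 1 < b_{i-1}` for all `i`, a maximal
independent set `W` containing `x_{i,j}` with `(i,j) ≠ (m,n)` contains exactly one of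
`x_{i+1,j}` and `x_{i,j+1}` (which in particular is a vertex of the graph). -/
theorem stmt10 (m n : ℕ) (hm : 1 ≤ m) (hmn : m ≤ n)
    (a b : ℕ → ℕ)
    (ha1 : a 1 = 0)
    (hamono : ∀ i, 1 ≤ i → i < m → a i ≤ a (i + 1))
    (ham : a m < n)
    (hb1 : 1 < b 1)
    (hbmono : ∀ i, 1 ≤ i → i < m → b i ≤ b (i + 1))
    (hbm : b m = n + 1)
    (hab : ∀ i, 2 ≤ i → i ≤ m - 1 → a i < b i)
    (A : Set (Fin m × Fin n))
    (hA : A = {p : Fin m × Fin n |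
      a (p.1.1 + 1) < p.2.1 + 1 ∧ p.2.1 + 1 < b (p.1.1 + 1)})
    (hab2 : ∀ i, 2 ≤ i → i ≤ m → a i + 1 < b (i - 1))
    (W : Set (Fin m × Fin n))
    (hW : MaxIndepOn (gridGraph m n) A W)
    (i : Fin m) (j : Fin n) (hmem : (i, j) ∈ W)
    (hne : ¬ (i.1 = m - 1 ∧ j.1 = n - 1)) :
    Xor' (∃ h : i.1 + 1 < m,
            ((⟨i.1 + 1, h⟩ : Fin m), j) ∈ A ∧ ((⟨i.1 + 1, h⟩ : Fin m), j) ∈ W)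
         (∃ h : j.1 + 1 < n,
            (i, (⟨j.1 + 1, h⟩ : Fin n)) ∈ A ∧ (i, (⟨j.1 + 1, h⟩ : Fin n)) ∈ W) :=
  stmt10_general m n a b hamono ham hbmono hbm A hA hab2 W hW i j hmem hne
end
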